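/- Let X_1, X_2, … be i.i.d. random variables with distribution N(0,1), and define R_1(X_{1:n}) = n^{3/2} · p(X_{1:n}, T_n = 1) / p_0(X_{1:n}), where p_0(x) = ∏_{j=1}^n φ(x_j). Then R_1(X_{1:n}) is bounded in probability: for every ε > 0 there exists B > 0 such that P( R_1(X_{1:n}) > B ) ≤ ε for all n ≥ 1. Moreover, deterministically, R_1(x_{1:n}) ≤ exp( z_n² / 2 ) for all x ∈ ℝ^n, where z_n = (1/√n) ∑_{j=1}^n x_j. -/

import Mathlib

open MeasureTheory Filter Finset

/-- The standard normal density `φ(u) = (2π)^{-1/2} exp(-u²/2)`. -/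
noncomputable def stdNormalPDF (u : ℝ) : ℝ :=
  (Real.sqrt (2 * Real.pi))⁻¹ * Real.exp (-u ^ 2 / 2)

/-- The single-cluster marginal `m(x_S)` of a unit-variance normal component with
standard normal prior on the mean, in closed form. -/
noncomputable def clusterMarginal {n : ℕ} (x : Fin n → ℝ) (S : Finset (Fin n)) : ℝ :=
  (Real.sqrt (S.card + 1))⁻¹ * (∏ j ∈ S, stdNormalPDF (x j)) *
    Real.exp ((∑ j ∈ S, x j) ^ 2 / (2 * (S.card + 1)))

/-- The set `𝒜_t(n)` of ordered partitions `(A_1, …, A_t)` of `{1,…,n}` into `t`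
nonempty disjoint sets. -/
def orderedPartitions (n t : ℕ) : Finset (Fin t → Finset (Fin n)) :=
  Finset.univ.filter fun A =>
    (∀ i, (A i).Nonempty) ∧ (∀ i j, i ≠ j → Disjoint (A i) (A j)) ∧
      Finset.univ.biUnion A = Finset.univ

/-- The CRP (α = 1) weight `p(A) = (1/(n!·t!)) ∏_i (|A_i| - 1)!` of an ordered partition
of `{1,…,n}` into `t` parts. -/
noncomputable def crpWeight {n t : ℕ} (A : Fin t → Finset (Fin n)) : ℝ :=
  (1 / ((n.factorial : ℝ) * (t.factorial : ℝ))) * ∏ i, (((A i).card - 1).factorial : ℝ)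

/-- The joint law of the data and the number of clusters under the standard normal DPM
with concentration parameter `α = 1`:
`p(x, T_n = t) = ∑_{A ∈ 𝒜_t(n)} p(A) ∏_i m(x_{A_i})`. -/
noncomputable def pJoint (n t : ℕ) (x : Fin n → ℝ) : ℝ :=
  ∑ A ∈ orderedPartitions n t, crpWeight A * ∏ i, clusterMarginal x (A i)

/-- The posterior probability of one cluster,
`p(T_n = 1 | x) = p(x, T_n = 1) / ∑_{t=1}^n p(x, T_n = t)`. -/
noncomputable def posteriorOne (n : ℕ) (x : Fin n → ℝ) : ℝ :=
  pJoint n 1 x / ∑ t ∈ Finset.Icc 1 n, pJoint n t x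

/-- `p₀(x) = ∏_j φ(x_j)`, the density of i.i.d. standard normal data. -/
noncomputable def pZero {n : ℕ} (x : Fin n → ℝ) : ℝ := ∏ j, stdNormalPDF (x j)

/-- `R_t(x_{1:n}) = n^{3/2} · p(x_{1:n}, T_n = t) / p₀(x_{1:n})`. -/
noncomputable def Rstat (t n : ℕ) (x : Fin n → ℝ) : ℝ :=
  (n : ℝ) ^ (3 / 2 : ℝ) * pJoint n t x / pZero x

/-! With a single cluster the posterior weight is explicit: writing `S = ∑ x_j`,
`R₁(x) = √(n/(n+1)) · exp(S² / (2(n+1))) ≤ exp((S/√n)² / 2)`. Under i.i.d. `N(0,1)` data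
`S/√n` has mean `0` and variance `1` for every `n`, so Chebyshev's inequality gives
`P(R₁ > exp(t/2)) ≤ P((S/√n)² ≥ t) ≤ 1/t` uniformly in `n`. -/

open Real ProbabilityTheory

lemma orderedPartitions_one {n : ℕ} (hn : n ≠ 0) :
    orderedPartitions n 1 = {fun _ => univ} := by
  ext A
  simp only [orderedPartitions, mem_filter, mem_univ, true_and, mem_singleton]
  constructor
  · rintro ⟨-, -, hcover⟩
    funext i
    rw [Subsingleton.elim i 0, ← hcover, univ_unique, singleton_biUnion]
    rfl
  · rintro rfl
    refine ⟨fun _ => univ_nonempty_iff.2 ⟨⟨0, Nat.pos_of_ne_zero hn⟩⟩,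
      fun i j hij => absurd (Subsingleton.elim i j) hij, by simp⟩

lemma crpWeight_const_univ {n : ℕ} (hn : n ≠ 0) :
    crpWeight (fun _ : Fin 1 => (univ : Finset (Fin n))) = (n : ℝ)⁻¹ := by
  have hfact : (n.factorial : ℝ) = n * (n - 1).factorial := by
    rw [← Nat.mul_factorial_pred hn, Nat.cast_mul]
  have hfact_ne : ((n - 1).factorial : ℝ) ≠ 0 := Nat.cast_ne_zero.2 (Nat.factorial_ne_zero _)
  simp only [crpWeight, prod_const, card_univ, Fintype.card_fin, Nat.factorial_one, pow_one,
    Nat.cast_one, mul_one, hfact]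
  field_simp

lemma pJoint_one {n : ℕ} (hn : n ≠ 0) (x : Fin n → ℝ) :
    pJoint n 1 x = (n : ℝ)⁻¹ * clusterMarginal x univ := by
  simp [pJoint, orderedPartitions_one hn, crpWeight_const_univ hn]

lemma pZero_pos {n : ℕ} (x : Fin n → ℝ) : 0 < pZero x :=
  prod_pos fun _ _ => by unfold stdNormalPDF; positivity

lemma Rstat_one_eq {n : ℕ} (hn : n ≠ 0) (x : Fin n → ℝ) :
    Rstat 1 n x = √n / √(n + 1) * exp ((∑ j, x j) ^ 2 / (2 * (n + 1))) := by
  have hn' : (0 : ℝ) < n := by positivity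
  have hscale : (n : ℝ) ^ (3 / 2 : ℝ) * (n : ℝ)⁻¹ = √n := by
    rw [← rpow_neg_one, ← rpow_add hn', sqrt_eq_rpow]
    norm_num
  have hp := (pZero_pos x).ne'
  rw [Rstat, pJoint_one hn, clusterMarginal, card_univ, Fintype.card_fin, ← pZero, ← hscale]
  field_simp

lemma Rstat_one_le_exp {n : ℕ} (hn : n ≠ 0) (x : Fin n → ℝ) :
    Rstat 1 n x ≤ exp (((∑ j, x j) / √n) ^ 2 / 2) := by
  have hn' : (0 : ℝ) < n := by positivity
  have hratio : √n / √(n + 1) ≤ 1 :=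
    div_le_one_of_le₀ (sqrt_le_sqrt (by linarith)) (sqrt_nonneg _)
  have hexp : exp ((∑ j, x j) ^ 2 / (2 * (n + 1))) ≤ exp (((∑ j, x j) / √n) ^ 2 / 2) := by
    rw [exp_le_exp, div_pow, sq_sqrt hn'.le, div_div]
    exact div_le_div_of_nonneg_left (sq_nonneg _) (by positivity) (by linarith)
  rw [Rstat_one_eq hn]
  exact (mul_le_of_le_one_left (exp_pos _).le hratio).trans hexp

lemma measure_le_sq_sum_div_sqrt_card_le_inv {Ω ι : Type*} [MeasurableSpace Ω] {μ : Measure Ω}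
    [IsProbabilityMeasure μ] [Fintype ι] [Nonempty ι] {Y : ι → Ω → ℝ} (hL2 : ∀ i, MemLp (Y i) 2 μ)
    (hmean : ∀ i, μ[Y i] = 0) (hvar : ∀ i, Var[Y i; μ] = 1)
    (hindep : Pairwise fun i j => IndepFun (Y i) (Y j) μ) {t : ℝ} (ht : 0 < t) :
    μ {ω | t ≤ ((∑ i, Y i ω) / √(Fintype.card ι)) ^ 2} ≤ ENNReal.ofReal t⁻¹ := by
  set N : ℝ := (Fintype.card ι : ℝ)
  have hN : 0 < N := by positivity
  have hmean_sum : μ[∑ i, Y i] = 0 := by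
    simp only [Finset.sum_apply]
    rw [integral_finsetSum _ fun i _ => (hL2 i).integrable one_le_two]
    simp [hmean]
  have hvar_sum : Var[∑ i, Y i; μ] = N := by
    rw [IndepFun.variance_sum (fun i _ => hL2 i) fun i _ j _ hij => hindep hij]
    simp [hvar, N]
  have hsubset : {ω | t ≤ ((∑ i, Y i ω) / √N) ^ 2} ⊆
      {ω | √(t * N) ≤ |(∑ i, Y i) ω - μ[∑ i, Y i]|} := by
    intro ω hω
    rw [Set.mem_ofPred_eq, div_pow, sq_sqrt hN.le, le_div_iff₀ hN] at hω
    rw [Set.mem_ofPred_eq, hmean_sum, sub_zero, Finset.sum_apply, ← sqrt_sq_eq_abs]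
    exact sqrt_le_sqrt hω
  refine (measure_mono hsubset).trans <|
    (meas_ge_le_variance_div_sq (memLp_finsetSum' _ fun i _ => hL2 i) (by positivity)).trans ?_
  rw [hvar_sum, sq_sqrt (by positivity), mul_comm, ← div_div, div_self hN.ne', one_div]

lemma ProbabilityTheory.HasLaw.memLp_of_gaussianReal {Ω : Type*} [MeasurableSpace Ω]
    {μ : Measure Ω} {X : Ω → ℝ} {m : ℝ} {v : NNReal} (hX : HasLaw X (gaussianReal m v) μ)
    (p : NNReal) : MemLp X p μ := by
  have h := memLp_id_gaussianReal (μ := m) (v := v) p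
  rw [← hX.map_eq] at h
  exact (memLp_map_measure_iff aestronglyMeasurable_id hX.aemeasurable).1 h

theorem Rstat_one_bounded_in_probability_general {Ω : Type*} [MeasurableSpace Ω]
    (μ : Measure Ω) [IsProbabilityMeasure μ] (X : ℕ → Ω → ℝ)
    (hindep : ProbabilityTheory.iIndepFun X μ)
    (hdist : ∀ i, Measure.map (X i) μ = ProbabilityTheory.gaussianReal 0 1) :
    (∀ ε : ℝ, 0 < ε → ∃ B : ℝ, 0 < B ∧ ∀ n : ℕ, 1 ≤ n →
      μ {ω | B < Rstat 1 n fun i : Fin n => X i ω} ≤ ENNReal.ofReal ε) ∧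
    ∀ (n : ℕ), 1 ≤ n → ∀ x : Fin n → ℝ,
      Rstat 1 n x ≤ Real.exp (((∑ j, x j) / Real.sqrt n) ^ 2 / 2) := by
  have hlaw : ∀ i, HasLaw (X i) (gaussianReal 0 1) μ := fun i =>
    ⟨aemeasurable_of_map_neZero (by rw [hdist i]; infer_instance), hdist i⟩
  refine ⟨fun ε hε => ⟨exp (ε⁻¹ / 2), exp_pos _, fun n hn => ?_⟩,
    fun n hn => Rstat_one_le_exp (by omega)⟩
  have : Nonempty (Fin n) := ⟨⟨0, hn⟩⟩
  have hsubset : {ω | exp (ε⁻¹ / 2) < Rstat 1 n fun i : Fin n => X i ω} ⊆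
      {ω | ε⁻¹ ≤ ((∑ i : Fin n, X i ω) / √(Fintype.card (Fin n))) ^ 2} := fun ω hω => by
    have := (hω.trans_le (Rstat_one_le_exp (by omega) _)).le
    rw [exp_le_exp] at this
    simp only [Set.mem_ofPred_eq, Fintype.card_fin]
    linarith
  refine (measure_mono hsubset).trans ?_
  simpa using measure_le_sq_sum_div_sqrt_card_le_inv (Y := fun i : Fin n => X i)
    (fun i => (hlaw i).memLp_of_gaussianReal 2)
    (fun i => by simp [(hlaw i).integral_eq, integral_id_gaussianReal])
    (fun i => by simp [(hlaw i).variance_eq, variance_id_gaussianReal])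
    (fun i j hij => hindep.indepFun (Fin.val_ne_of_ne hij)) (inv_pos.2 hε)

/-- If `X₁, X₂, …` are i.i.d. `N(0,1)` then `R₁(X_{1:n})` is bounded in probability:
for every `ε > 0` there is `B > 0` such that `P(R₁(X_{1:n}) > B) ≤ ε` for all `n ≥ 1`.
Moreover, deterministically, `R₁(x_{1:n}) ≤ exp(z_n²/2)` for all `x ∈ ℝⁿ`, where
`z_n = (1/√n) ∑_j x_j`. -/
theorem Rstat_one_bounded_in_probability {Ω : Type*} [MeasurableSpace Ω]
    (μ : Measure Ω) [IsProbabilityMeasure μ] (X : ℕ → Ω → ℝ)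
    (hmeas : ∀ i, Measurable (X i))
    (hindep : ProbabilityTheory.iIndepFun X μ)
    (hdist : ∀ i, Measure.map (X i) μ = ProbabilityTheory.gaussianReal 0 1) :
    (∀ ε : ℝ, 0 < ε → ∃ B : ℝ, 0 < B ∧ ∀ n : ℕ, 1 ≤ n →
      μ {ω | B < Rstat 1 n fun i : Fin n => X i ω} ≤ ENNReal.ofReal ε) ∧
    ∀ (n : ℕ), 1 ≤ n → ∀ x : Fin n → ℝ,
      Rstat 1 n x ≤ Real.exp (((∑ j, x j) / Real.sqrt n) ^ 2 / 2) :=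
  Rstat_one_bounded_in_probability_general μ X hindep hdist
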